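/- Let h : ℝ → ℝ be continuous. If ∫₀ˣ (x − t)⁶ h(t) dt = 0 for every x ∈ [0, 1], then h(t) = 0 for every t ∈ [0, 1]. -/

import Mathlib

/-!
Write `Φₙ h y = ∫ₐʸ (y - t)ⁿ h(t) dt`. Splitting `(y - t)ⁿ⁺¹ = y (y - t)ⁿ - t (y - t)ⁿ` gives
`Φₙ₊₁ h y = y Φₙ h y - Φₙ (t h) y`, and induction on `n` then yields `(Φₙ₊₁ h)' = (n + 1) Φₙ h`.
So if `Φ₆ h` vanishes on `[0, 1]`, six differentiations show that `Φ₀ h = ∫ₐʸ h` vanishes there,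
and one more gives `h = 0`.
-/

open Set

variable {E : Type*} [NormedAddCommGroup E] [NormedSpace ℝ E]

lemma eqOn_zero_of_hasDerivAt_of_eqOn_zero {f g : ℝ → E} {s : Set ℝ} (hs : UniqueDiffOn ℝ s)
    (hf : ∀ x ∈ s, HasDerivAt f (g x) x) (h0 : EqOn f 0 s) : EqOn g 0 s := fun x hx =>
  (hs x hx).eq_deriv s (hf x hx).hasDerivWithinAt
    ((hasDerivWithinAt_const x s (0 : E)).congr_of_mem (fun _ hy => h0 hy) hx)

noncomputable def kernelIntegral (a : ℝ) (n : ℕ) (h : ℝ → E) (y : ℝ) : E :=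
  ∫ t in a..y, (y - t) ^ n • h t

namespace kernelIntegral

variable {a : ℝ} {h : ℝ → E}

lemma succ_eq (hc : Continuous h) (n : ℕ) (y : ℝ) :
    kernelIntegral a (n + 1) h y =
      y • kernelIntegral a n h y - kernelIntegral a n (fun t => t • h t) y := by
  rw [kernelIntegral, kernelIntegral, kernelIntegral, ← intervalIntegral.integral_smul,
    ← intervalIntegral.integral_sub (Continuous.intervalIntegrable (by fun_prop) _ _)
      (Continuous.intervalIntegrable (by fun_prop) _ _)]
  congr 1 with t
  rw [smul_smul, smul_smul, ← sub_smul, pow_succ]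
  ring_nf

variable [CompleteSpace E]

lemma hasDerivAt_zero (hc : Continuous h) (y : ℝ) :
    HasDerivAt (kernelIntegral a 0 h) (h y) y := by
  have hΦ : kernelIntegral a 0 h = fun u => ∫ t in a..u, h t := by
    funext u
    simp only [kernelIntegral, pow_zero, one_smul]
  exact hΦ ▸ (hc.integral_hasStrictDerivAt a y).hasDerivAt

lemma hasDerivAt_succ (n : ℕ) (hc : Continuous h) (y : ℝ) :
    HasDerivAt (kernelIntegral a (n + 1) h) ((n + 1 : ℝ) • kernelIntegral a n h y) y := by
  induction n generalizing h with
  | zero =>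
    have hth : Continuous fun t => t • h t := by fun_prop
    convert ((hasDerivAt_id y).smul (hasDerivAt_zero hc y)).sub (hasDerivAt_zero hth y)
      using 1
    · exact funext (succ_eq hc 0)
    · simp
  | succ n ih =>
    have hth : Continuous fun t => t • h t := by fun_prop
    convert ((hasDerivAt_id y).smul (ih hc)).sub (ih hth) using 1
    · exact funext (succ_eq hc (n + 1))
    · rw [succ_eq hc n y]
      simp only [id, one_smul, Nat.cast_add, Nat.cast_one, smul_sub, smul_comm y]
      module

end kernelIntegral

lemma eqOn_zero_of_kernelIntegral_eqOn_zero [CompleteSpace E] {a : ℝ} {h : ℝ → E} {s : Set ℝ}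
    (hs : UniqueDiffOn ℝ s) (hc : Continuous h) (n : ℕ) (h0 : EqOn (kernelIntegral a n h) 0 s) :
    EqOn h 0 s := by
  induction n with
  | zero =>
    exact eqOn_zero_of_hasDerivAt_of_eqOn_zero hs
      (fun y _ => kernelIntegral.hasDerivAt_zero hc y) h0
  | succ n ih =>
    refine ih fun y hy => ?_
    have hderiv := eqOn_zero_of_hasDerivAt_of_eqOn_zero hs
      (fun y _ => kernelIntegral.hasDerivAt_succ n hc y) h0 hy
    exact (smul_eq_zero.mp hderiv).resolve_left (by positivity)

/-- If `h` is continuous and `∫₀ˣ (x - t)^6 h(t) dt = 0` for every `x ∈ [0,1]`,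
then `h` vanishes on `[0,1]`. -/
theorem kernel_integral_vanishing (h : ℝ → ℝ) (hc : Continuous h)
    (hint : ∀ x ∈ Set.Icc (0 : ℝ) 1, ∫ t in (0 : ℝ)..x, (x - t) ^ 6 * h t = 0) :
    ∀ t ∈ Set.Icc (0 : ℝ) 1, h t = 0 :=
  eqOn_zero_of_kernelIntegral_eqOn_zero (uniqueDiffOn_Icc zero_lt_one) hc 6 hint
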